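/- arXiv:1809.02476 — 6 statements merged into one kernel-verified Lean document; each statement's English description precedes it below -/
import Mathlib

section
/- Let K₁ and K₂ be nonempty closed convex subsets of ℝⁿ. Then the set S = { x ∈ ℝⁿ : dist(x,K₁) = dist(x,K₂) and proj_{K₁}(x) ≠ proj_{K₂}(x) } has Lebesgue measure zero. -/
/-!
For a convex set `K` with nearest-point map `p`, the function `x ↦ ‖x - p x‖²` is differentiable
with gradient `2 (x - p x)`: its value at `x + h` lies between `‖x - p x‖² + 2⟪x - p x, h⟫` and
that plus `‖h‖²`, the lower bound being the variational inequality for `p`.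
Hence `g = d(·, K₁)² - d(·, K₂)²` is differentiable with gradient `2 (proj₂ x - proj₁ x)`, and the
set in question lies in `{g = 0, ∇g ≠ 0}`. Where the `i`-th partial derivative is nonzero, the
zeros of `g` on each line parallel to the `i`-th axis are isolated, hence countable, so by Fubini
that part of the zero set is null.
-/

open Metric MeasureTheory RealInnerProductSpace Filter Topology

def IsNearestPointMap {F : Type*} [MetricSpace F] (K : Set F) (p : F → F) : Prop :=
  ∀ x, p x ∈ K ∧ ∀ q ∈ K, dist x (p x) ≤ dist x q

namespace IsNearestPointMap

variable {F : Type*} [NormedAddCommGroup F] {K : Set F} {p : F → F}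

theorem infDist_eq (hp : IsNearestPointMap K p) (x : F) : infDist x K = ‖x - p x‖ := by
  rw [← dist_eq_norm]
  exact le_antisymm (infDist_le_dist_of_mem (hp x).1)
    ((le_infDist ⟨_, (hp x).1⟩).2 (hp x).2)

variable [InnerProductSpace ℝ F]

theorem inner_sub_le_zero (hp : IsNearestPointMap K p) (hK : Convex ℝ K) (x : F) {q : F}
    (hq : q ∈ K) : ⟪x - p x, q - p x⟫ ≤ 0 := by
  refine (norm_eq_iInf_iff_real_inner_le_zero hK (hp x).1).1 ?_ q hq
  simp only [← hp.infDist_eq, infDist_eq_iInf, dist_eq_norm]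

theorem sq_norm_sub_add_le (hp : IsNearestPointMap K p) (x h : F) :
    ‖x + h - p (x + h)‖ ^ 2 ≤ ‖x - p x‖ ^ 2 + 2 * ⟪x - p x, h⟫ + ‖h‖ ^ 2 := by
  have hmin := (hp (x + h)).2 (p x) (hp x).1
  rw [dist_eq_norm, dist_eq_norm] at hmin
  calc ‖x + h - p (x + h)‖ ^ 2 ≤ ‖x - p x + h‖ ^ 2 := by
        rw [sub_add_eq_add_sub]; gcongr
    _ = _ := norm_add_sq_real _ _

theorem sq_norm_sub_add_ge (hp : IsNearestPointMap K p) (hK : Convex ℝ K) (x h : F) :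
    ‖x - p x‖ ^ 2 + 2 * ⟪x - p x, h⟫ ≤ ‖x + h - p (x + h)‖ ^ 2 := by
  set v := p (x + h) - p x
  have hv : ⟪x - p x, v⟫ ≤ 0 := hp.inner_sub_le_zero hK x (hp (x + h)).1
  have hsplit : x + h - p (x + h) = (x - p x) + (h - v) := by simp only [v]; abel
  rw [hsplit, norm_add_sq_real, inner_sub_right]
  nlinarith [sq_nonneg ‖h - v‖]

theorem hasFDerivAt_sq_norm_sub (hp : IsNearestPointMap K p) (hK : Convex ℝ K) (x : F) :
    HasFDerivAt (fun y => ‖y - p y‖ ^ 2) ((2 : ℝ) • innerSL ℝ (x - p x)) x := by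
  rw [hasFDerivAt_iff_isLittleO_nhds_zero]
  refine Asymptotics.IsBigO.trans_isLittleO (g := fun h : F => ‖h‖ ^ 2) ?_
    (Asymptotics.isLittleO_norm_pow_id one_lt_two)
  refine Asymptotics.IsBigO.of_bound 1 (Eventually.of_forall fun h => ?_)
  have hle := hp.sq_norm_sub_add_le x h
  have hge := hp.sq_norm_sub_add_ge hK x h
  simp only [smul_apply, innerSL_apply_apply, smul_eq_mul, Real.norm_eq_abs,
    one_mul, abs_pow, abs_norm, abs_le]
  constructor <;> linarith [sq_nonneg ‖h‖]

end IsNearestPointMap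

theorem Set.Countable.of_forall_eventually_notMem_nhdsNE {α : Type*} [TopologicalSpace α]
    [SecondCountableTopology α] {s : Set α} (h : ∀ x ∈ s, ∀ᶠ y in 𝓝[≠] x, y ∉ s) :
    s.Countable :=
  (HereditarilyLindelofSpace.isLindelof s).countable_of_isDiscrete <|
    isDiscrete_iff_nhdsNE.2 fun x hx => inf_principal_eq_bot.2 (h x hx)

theorem countable_setOf_eq_zero_and_ne_zero_of_hasDerivAt {E : Type*} [NormedAddCommGroup E]
    [NormedSpace ℝ E] {f f' : ℝ → E} (hf : ∀ t, HasDerivAt f (f' t) t) :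
    {t | f t = 0 ∧ f' t ≠ 0}.Countable :=
  Set.Countable.of_forall_eventually_notMem_nhdsNE fun t ht =>
    ((hf t).eventually_ne ht.2).mono fun _ hs hmem => hs hmem.1

theorem EuclideanSpace.volume_eq_zero_of_countable_lines {n : ℕ}
    {A : Set (EuclideanSpace ℝ (Fin n))} (hA : MeasurableSet A) (i : Fin n)
    (h : ∀ x, {t : ℝ | x + t • EuclideanSpace.single i 1 ∈ A}.Countable) : volume A = 0 := by
  obtain ⟨m, rfl⟩ : ∃ m, n = m + 1 := Nat.exists_eq_add_one.2 i.pos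
  set e : ℝ × (Fin m → ℝ) → EuclideanSpace ℝ (Fin (m + 1)) :=
    fun y => WithLp.toLp 2 (i.insertNth y.1 y.2) with he
  have he_pres : MeasurePreserving e (volume.prod volume) volume :=
    (PiLp.volume_preserving_toLp (Fin (m + 1))).comp
      (volume_preserving_piFinSuccAbove (fun _ => ℝ) i).symm
  have he_line : ∀ t f, e (t, f) = e (0, f) + t • EuclideanSpace.single i 1 := by
    intro t f
    ext j
    rcases eq_or_ne j i with rfl | hj
    · simp [he]
    · obtain ⟨k, rfl⟩ := Fin.exists_succAbove_eq hj
      simp [he, hj]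
  have hslice : ∀ f, volume ((fun t => (t, f)) ⁻¹' (e ⁻¹' A)) = 0 := fun f => by
    have hline : (fun t => (t, f)) ⁻¹' (e ⁻¹' A) =
        {t | e (0, f) + t • EuclideanSpace.single i 1 ∈ A} :=
      Set.ext fun t => by rw [Set.mem_preimage, Set.mem_preimage, he_line t f]; rfl
    rw [hline]
    exact (h _).measure_zero _
  rw [← he_pres.measure_preimage hA.nullMeasurableSet,
    Measure.prod_apply_symm (he_pres.measurable hA)]
  simp [hslice]

theorem EuclideanSpace.volume_setOf_eq_zero_and_fderiv_ne_zero {n : ℕ}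
    {g : EuclideanSpace ℝ (Fin n) → ℝ} (hg : Differentiable ℝ g) :
    volume {x | g x = 0 ∧ fderiv ℝ g x ≠ 0} = 0 := by
  set T : Fin n → Set (EuclideanSpace ℝ (Fin n)) :=
    fun i => {x | g x = 0 ∧ fderiv ℝ g x (EuclideanSpace.single i 1) ≠ 0}
  have hcover : {x | g x = 0 ∧ fderiv ℝ g x ≠ 0} ⊆ ⋃ i, T i := by
    rintro x ⟨hx0, hx⟩
    by_contra hnot
    simp only [Set.mem_iUnion, not_exists, T, Set.mem_ofPred_eq, hx0, true_and, not_not] at hnot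
    refine hx (ContinuousLinearMap.coe_injective <|
      (EuclideanSpace.basisFun (Fin n) ℝ).toBasis.ext fun i => ?_)
    simpa using hnot i
  refine measure_mono_null hcover (measure_iUnion_null fun i => ?_)
  refine EuclideanSpace.volume_eq_zero_of_countable_lines
    ((measurableSet_singleton 0).preimage hg.continuous.measurable |>.inter
      ((measurableSet_singleton 0).compl.preimage (measurable_fderiv_apply_const ℝ g _))) i
    fun x => ?_
  refine countable_setOf_eq_zero_and_ne_zero_of_hasDerivAt fun t => ?_
  simpa [Function.comp_def] using (hg _).hasFDerivAt.comp_hasDerivAt t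
    (((hasDerivAt_id t).smul_const (EuclideanSpace.single i (1 : ℝ))).const_add x)

theorem stmt1_general {n : ℕ} (K₁ K₂ : Set (EuclideanSpace ℝ (Fin n)))
    (hconv₁ : Convex ℝ K₁)
    (hconv₂ : Convex ℝ K₂)
    (proj₁ proj₂ : EuclideanSpace ℝ (Fin n) → EuclideanSpace ℝ (Fin n))
    (hproj₁ : ∀ x, proj₁ x ∈ K₁ ∧ ∀ q ∈ K₁, dist x (proj₁ x) ≤ dist x q)
    (hproj₂ : ∀ x, proj₂ x ∈ K₂ ∧ ∀ q ∈ K₂, dist x (proj₂ x) ≤ dist x q) :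
    volume {x : EuclideanSpace ℝ (Fin n) |
      infDist x K₁ = infDist x K₂ ∧ proj₁ x ≠ proj₂ x} = 0 := by
  have hp₁ : IsNearestPointMap K₁ proj₁ := hproj₁
  have hp₂ : IsNearestPointMap K₂ proj₂ := hproj₂
  set g := fun x => ‖x - proj₁ x‖ ^ 2 - ‖x - proj₂ x‖ ^ 2
  have hg : ∀ x, HasFDerivAt g ((2 : ℝ) • innerSL ℝ (proj₂ x - proj₁ x)) x := fun x =>
    ((hp₁.hasFDerivAt_sq_norm_sub hconv₁ x).sub
      (hp₂.hasFDerivAt_sq_norm_sub hconv₂ x)).congr_fderiv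
      (by rw [← smul_sub, ← map_sub, sub_sub_sub_cancel_left])
  refine measure_mono_null ?_
    (EuclideanSpace.volume_setOf_eq_zero_and_fderiv_ne_zero fun x => (hg x).differentiableAt)
  rintro x ⟨hdist, hne⟩
  refine ⟨?_, ?_⟩
  · simp only [g, ← hp₁.infDist_eq, ← hp₂.infDist_eq, hdist, sub_self]
  · rw [(hg x).fderiv]
    simp [sub_eq_zero, hne.symm]

theorem stmt1 {n : ℕ} (K₁ K₂ : Set (EuclideanSpace ℝ (Fin n)))
    (hne₁ : K₁.Nonempty) (hcl₁ : IsClosed K₁) (hconv₁ : Convex ℝ K₁)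
    (hne₂ : K₂.Nonempty) (hcl₂ : IsClosed K₂) (hconv₂ : Convex ℝ K₂)
    (proj₁ proj₂ : EuclideanSpace ℝ (Fin n) → EuclideanSpace ℝ (Fin n))
    (hproj₁ : ∀ x, proj₁ x ∈ K₁ ∧ ∀ q ∈ K₁, dist x (proj₁ x) ≤ dist x q)
    (hproj₂ : ∀ x, proj₂ x ∈ K₂ ∧ ∀ q ∈ K₂, dist x (proj₂ x) ≤ dist x q) :
    volume {x : EuclideanSpace ℝ (Fin n) |
      infDist x K₁ = infDist x K₂ ∧ proj₁ x ≠ proj₂ x} = 0 :=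
  stmt1_general K₁ K₂ hconv₁ hconv₂ proj₁ proj₂ hproj₁ hproj₂
end

section
/- Let f : ℝⁿ → ℝ be a function and A ⊆ ℝⁿ an open set on which f is differentiable with nonvanishing gradient. Then A ∩ f⁻¹({0}) has Lebesgue measure zero. -/
/-!
Let `x` be a point of the level set where the derivative `f'` does not vanish, and pick `v` with
`f' v ≠ 0`. Since `f (x + r • u) - f x ≈ r • f' u`, for a small ball `U` around `v` and all small
`r > 0` the set `x + r • U` misses the level set. Its measure is a fixed fraction of that of the
ball of radius `r` around `x`, so `x` is not a Lebesgue density point of the level set; but almost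
every point of a set is one.
-/

open Metric MeasureTheory
open Filter Set Topology
open scoped Pointwise

theorem HasFDerivAt.eventually_ne_add_smul {𝕜 E F : Type*} [NontriviallyNormedField 𝕜]
    [NormedAddCommGroup E] [NormedSpace 𝕜 E] [NormedAddCommGroup F] [NormedSpace 𝕜 F]
    {f : E → F} {f' : E →L[𝕜] F} {x v : E} (hf : HasFDerivAt f f' x) (hv : f' v ≠ 0) :
    ∀ᶠ p in 𝓝[≠] (0 : 𝕜) ×ˢ 𝓝 v, f (x + p.1 • p.2) ≠ f x := by
  have hd : Tendsto (fun p : 𝕜 × E => p.1 • p.2) (𝓝[≠] 0 ×ˢ 𝓝 v) (𝓝 0) := by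
    have h₁ : Tendsto (fun p : 𝕜 × E => p.1) (𝓝[≠] 0 ×ˢ 𝓝 v) (𝓝 0) :=
      tendsto_nhdsWithin_of_tendsto_nhds tendsto_id |>.comp tendsto_fst
    simpa using h₁.smul (tendsto_snd (f := 𝓝[≠] (0 : 𝕜)) (g := 𝓝 v))
  have hcd : Tendsto (fun p : 𝕜 × E => p.1⁻¹ • p.1 • p.2) (𝓝[≠] 0 ×ˢ 𝓝 v) (𝓝 v) := by
    refine tendsto_snd.congr' ?_
    filter_upwards [prod_mem_prod self_mem_nhdsWithin univ_mem] with p hp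
    rw [smul_smul, inv_mul_cancel₀ hp.1, one_smul]
  have hslope := (hasFDerivWithinAt_univ.2 hf).lim hd (.of_forall fun _ => mem_univ _) hcd
  filter_upwards [hslope.eventually_ne hv] with p hp hfp
  simp [hfp] at hp

namespace MeasureTheory.Measure

variable {E : Type*} [NormedAddCommGroup E] [NormedSpace ℝ E] [MeasurableSpace E] [BorelSpace E]
  [FiniteDimensional ℝ E] (μ : Measure E) [μ.IsAddHaarMeasure]

theorem addHaar_eq_zero_of_forall_eventually_disjoint (s : Set E)
    (h : ∀ x ∈ s, ∃ t, MeasurableSet t ∧ μ t ≠ 0 ∧ ∀ᶠ r : ℝ in 𝓝[>] 0, Disjoint s ({x} + r • t)) :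
    μ s = 0 := by
  have hdensity := Besicovitch.ae_tendsto_measure_inter_div μ s
  rw [ae_iff] at hdensity
  rw [← restrict_apply_self]
  refine measure_mono_null ?_ hdensity
  intro x hx hx_density
  obtain ⟨t, ht, hμt, hdisj⟩ := h x hx
  obtain ⟨r, hne, hrdisj⟩ := ((eventually_nonempty_inter_smul_of_density_one μ s x
    hx_density t ht hμt).and hdisj).exists
  exact hne.ne_empty hrdisj.inter_eq

theorem addHaar_inter_preimage_singleton_eq_zero {F : Type*} [NormedAddCommGroup F]
    [NormedSpace ℝ F] {f : E → F} {f' : E → E →L[ℝ] F} {s : Set E}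
    (hf : ∀ x ∈ s, HasFDerivAt f (f' x) x) (hf' : ∀ x ∈ s, f' x ≠ 0) (c : F) : μ (s ∩ f ⁻¹' {c}) = 0 := by
  refine addHaar_eq_zero_of_forall_eventually_disjoint μ _ fun x ⟨hxs, hfx⟩ => ?_
  obtain ⟨v, hv⟩ : ∃ v, f' x v ≠ 0 := by
    by_contra! h
    exact hf' x hxs (ContinuousLinearMap.ext h)
  have hne : ∀ᶠ p in 𝓝[>] (0 : ℝ) ×ˢ 𝓝 v, f (x + p.1 • p.2) ≠ f x :=
    ((hf x hxs).eventually_ne_add_smul hv).filter_mono <|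
      Filter.prod_mono (nhdsGT_le_nhdsNE 0) le_rfl
  obtain ⟨R, hR, U, hU, hRU⟩ := eventually_prod_iff.1 hne
  obtain ⟨ε, hε, hεU⟩ := Metric.mem_nhds_iff.1 hU
  refine ⟨ball v ε, measurableSet_ball, (measure_ball_pos μ v hε).ne', ?_⟩
  filter_upwards [hR] with r hr
  rw [disjoint_left]
  rintro _ ⟨-, hfy⟩ ⟨_, rfl, _, ⟨z, hz, rfl⟩, rfl⟩
  exact hRU hr (hεU hz) (hfy.trans hfx.symm)

end MeasureTheory.Measure

theorem stmt2_general {n : ℕ} (f : EuclideanSpace ℝ (Fin n) → ℝ)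
    (g : EuclideanSpace ℝ (Fin n) → EuclideanSpace ℝ (Fin n))
    (A : Set (EuclideanSpace ℝ (Fin n)))
    (hf : ∀ x ∈ A, HasGradientAt f (g x) x) (hg : ∀ x ∈ A, g x ≠ 0) :
    volume (A ∩ f ⁻¹' {0}) = 0 :=
  Measure.addHaar_inter_preimage_singleton_eq_zero volume (fun x hx => (hf x hx).hasFDerivAt)
    (fun x hx => by simpa using hg x hx) 0

theorem stmt2 {n : ℕ} (f : EuclideanSpace ℝ (Fin n) → ℝ)
    (g : EuclideanSpace ℝ (Fin n) → EuclideanSpace ℝ (Fin n))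
    (A : Set (EuclideanSpace ℝ (Fin n))) (hA : IsOpen A)
    (hf : ∀ x ∈ A, HasGradientAt f (g x) x) (hg : ∀ x ∈ A, g x ≠ 0) :
    volume (A ∩ f ⁻¹' {0}) = 0 :=
  stmt2_general f g A hf hg
end

section
/- Let L and L' be affine subspaces of ℝⁿ with L' a proper subset of L. Then the set of points x ∈ ℝⁿ satisfying dist(x, L') = dist(x, L) is contained in a proper affine subspace of ℝⁿ; in particular it has Lebesgue measure zero. -/
open Metric MeasureTheory EuclideanGeometry

/-
Let `π`, `π'` be the orthogonal projections onto `s` and onto `s' ≤ s`. Since `π' p ∈ s`, Pythagoras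
gives `dist p (π' p) ^ 2 = dist p (π p) ^ 2 + dist (π p) (π' p) ^ 2`, so `dist p s' = dist p s`
forces `π p = π' p ∈ s'`. Hence the equidistant set lies in `π⁻¹ s'`, an affine subspace that is
proper when `s' < s` because `π` fixes the points of `s \ s'`; proper affine subspaces of `ℝⁿ`
are Lebesgue-null.
-/

namespace EuclideanGeometry

variable {𝕜 V P : Type*} [RCLike 𝕜] [NormedAddCommGroup V] [InnerProductSpace 𝕜 V]
  [MetricSpace P] [NormedAddTorsor V P]
  {s' s : AffineSubspace 𝕜 P} [Nonempty s] [s.direction.HasOrthogonalProjection]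

theorem orthogonalProjection_eq_of_infDist_eq [Nonempty s'] [s'.direction.HasOrthogonalProjection]
    (hle : s' ≤ s) {p : P} (hp : infDist p s' = infDist p s) :
    (orthogonalProjection s p : P) = orthogonalProjection s' p := by
  rw [← dist_orthogonalProjection_eq_infDist, ← dist_orthogonalProjection_eq_infDist] at hp
  exact (dist_orthogonalProjection_eq_dist_iff_eq_of_mem (hle (orthogonalProjection_mem p))).1
    hp.symm

theorem setOf_infDist_eq_subset_comap [Nonempty s'] [s'.direction.HasOrthogonalProjection]
    (hle : s' ≤ s) :
    {p : P | infDist p s' = infDist p s} ⊆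
      s'.comap (s.subtype.comp (orthogonalProjection s).toAffineMap) := by
  intro p hp
  change (orthogonalProjection s p : P) ∈ s'
  rw [orthogonalProjection_eq_of_infDist_eq hle hp]
  exact orthogonalProjection_mem p

theorem comap_orthogonalProjection_ne_top (hlt : s' < s) :
    s'.comap (s.subtype.comp (orthogonalProjection s).toAffineMap) ≠ ⊤ := by
  obtain ⟨q, hqs, hqs'⟩ := SetLike.exists_of_lt hlt
  intro htop
  have hq : q ∈ s'.comap (s.subtype.comp (orthogonalProjection s).toAffineMap) :=
    htop ▸ AffineSubspace.mem_top 𝕜 V q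
  rw [AffineSubspace.mem_comap] at hq
  exact hqs' (orthogonalProjection_eq_self_iff.2 hqs ▸ hq)

end EuclideanGeometry

theorem stmt3 {n : ℕ} (L L' : AffineSubspace ℝ (EuclideanSpace ℝ (Fin n)))
    (hne' : (L' : Set (EuclideanSpace ℝ (Fin n))).Nonempty)
    (hssub : (L' : Set (EuclideanSpace ℝ (Fin n))) ⊂ (L : Set (EuclideanSpace ℝ (Fin n)))) :
    ∃ M : AffineSubspace ℝ (EuclideanSpace ℝ (Fin n)), M ≠ ⊤ ∧
      {x : EuclideanSpace ℝ (Fin n) |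
        infDist x (L' : Set (EuclideanSpace ℝ (Fin n))) =
          infDist x (L : Set (EuclideanSpace ℝ (Fin n)))} ⊆ (M : Set (EuclideanSpace ℝ (Fin n))) ∧
      volume {x : EuclideanSpace ℝ (Fin n) |
        infDist x (L' : Set (EuclideanSpace ℝ (Fin n))) =
          infDist x (L : Set (EuclideanSpace ℝ (Fin n)))} = 0 := by
  have : Nonempty L' := hne'.to_subtype
  have : Nonempty L := (hne'.mono hssub.subset).to_subtype
  have hlt : L' < L := SetLike.coe_ssubset_coe.1 hssub
  have hsub := setOf_infDist_eq_subset_comap hlt.le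
  have hne := comap_orthogonalProjection_ne_top hlt
  exact ⟨_, hne, hsub, measure_mono_null hsub (Measure.addHaar_affineSubspace volume _ hne)⟩
end

section
/- Let A be a countable family of nonempty closed convex subsets of ℝⁿ. The set of points x₀ ∈ ℝⁿ such that dist(x₀, K) ≠ dist(x₀, K') for every pair of distinct K, K' ∈ A having distinct projections proj_K(x₀) ≠ proj_{K'}(x₀), is dense in ℝⁿ. -/
open Metric MeasureTheory
open scoped RealInnerProductSpace

variable {F : Type*} [NormedAddCommGroup F] [InnerProductSpace ℝ F]

private lemma le_infDist' {α : Type*} [MetricSpace α] {s : Set α} {x : α}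
    {b : ℝ} (hs : s.Nonempty) (h : ∀ y ∈ s, b ≤ dist x y) : b ≤ infDist x s := by
  by_contra hb
  push_neg at hb
  obtain ⟨y, hy, hd⟩ := (infDist_lt_iff hs).1 hb
  exact (h y hy).not_gt hd

private lemma aux_pt {K K' : Set F}
    (hKne : K.Nonempty) (hKcl : IsClosed K) (hKcv : Convex ℝ K)
    (hK'ne : K'.Nonempty) (hK'cl : IsClosed K') (hK'cv : Convex ℝ K')
    {x p p' : F}
    (hpmem : p ∈ K) (hpmin : ∀ q ∈ K, dist x p ≤ dist x q)
    (hp'mem : p' ∈ K') (hp'min : ∀ q ∈ K', dist x p' ≤ dist x q)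
    (hpp' : p ≠ p') (heq : infDist x K = infDist x K') :
    ∀ ε > 0, ∃ y, dist y x < ε ∧ infDist y K ≠ infDist y K' := by
  intro ε hε
  set d : ℝ := infDist x K with hd
  have hdp : dist x p = d := le_antisymm (le_infDist' hKne hpmin) (infDist_le_dist_of_mem hpmem)
  have hdp' : dist x p' = d := by
    rw [heq]
    exact le_antisymm (le_infDist' hK'ne hp'min) (infDist_le_dist_of_mem hp'mem)
  have hdpos : 0 < d := by
    rcases lt_or_eq_of_le (infDist_nonneg : (0:ℝ) ≤ d) with h | h
    · exact h
    · exfalso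
      have hxK : x ∈ K := (hKcl.mem_iff_infDist_zero hKne).2 h.symm
      have hxK' : x ∈ K' := (hK'cl.mem_iff_infDist_zero hK'ne).2 (heq ▸ h.symm)
      have h1 : dist x p ≤ 0 := by simpa using hpmin x hxK
      have h2 : dist x p' ≤ 0 := by simpa using hp'min x hxK'
      have e1 : p = x := (eq_of_dist_eq_zero (le_antisymm h1 dist_nonneg)).symm
      have e2 : p' = x := (eq_of_dist_eq_zero (le_antisymm h2 dist_nonneg)).symm
      exact hpp' (e1.trans e2.symm)
  -- variational inequalities
  have hvarK : ∀ w ∈ K, ⟪x - p, w - p⟫ ≤ 0 := by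
    refine (norm_eq_iInf_iff_real_inner_le_zero hKcv hpmem).1 ?_
    rw [← dist_eq_norm, hdp, hd, infDist_eq_iInf]
    exact iInf_congr fun w => dist_eq_norm x w
  have hvarK' : ∀ w ∈ K', ⟪x - p', w - p'⟫ ≤ 0 := by
    refine (norm_eq_iInf_iff_real_inner_le_zero hK'cv hp'mem).1 ?_
    rw [← dist_eq_norm, hdp', heq, infDist_eq_iInf]
    exact iInf_congr fun w => dist_eq_norm x w
  set u : F := d⁻¹ • (x - p) with hu_def
  set u' : F := d⁻¹ • (x - p') with hu'_def
  have hnu : ‖u‖ = 1 := by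
    rw [hu_def, norm_smul, ← dist_eq_norm, hdp, Real.norm_eq_abs,
      abs_of_pos (inv_pos.2 hdpos), inv_mul_cancel₀ hdpos.ne']
  have hnu' : ‖u'‖ = 1 := by
    rw [hu'_def, norm_smul, ← dist_eq_norm, hdp', Real.norm_eq_abs,
      abs_of_pos (inv_pos.2 hdpos), inv_mul_cancel₀ hdpos.ne']
  have huu' : u ≠ u' := by
    intro h
    apply hpp'
    have h2 : x - p = x - p' :=
      smul_right_injective F (inv_ne_zero hdpos.ne') h
    linear_combination (norm := module) -h2
  set c : ℝ := 1 - ⟪u, u'⟫ with hc_def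
  have hc2 : ‖u - u'‖ ^ 2 = 2 * c := by
    rw [norm_sub_sq_real, hnu, hnu', hc_def]; ring
  have hcpos : 0 < c := by
    have h1 : 0 < ‖u - u'‖ := norm_pos_iff.2 (sub_ne_zero.2 huu')
    have h2 := pow_pos h1 2
    rw [hc2] at h2
    linarith
  have hcle : c ≤ 2 := by
    have h1 : ‖u - u'‖ ≤ 2 := by
      calc ‖u - u'‖ ≤ ‖u‖ + ‖u'‖ := norm_sub_le _ _
        _ = 2 := by rw [hnu, hnu']; norm_num
    nlinarith [hc2, h1, norm_nonneg (u - u')]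
  have hnuu' : 0 < ‖u' - u‖ := by
    rw [norm_sub_rev]; exact norm_pos_iff.2 (sub_ne_zero.2 huu')
  set t : ℝ := min (ε / (2 * ‖u' - u‖)) d with ht_def
  have htpos : 0 < t := lt_min (div_pos hε (by positivity)) hdpos
  have htd : t ≤ d := min_le_right _ _
  set y : F := x + t • (u' - u) with hy_def
  refine ⟨y, ?_, ?_⟩
  · have hdy : dist y x = t * ‖u' - u‖ := by
      rw [hy_def, dist_eq_norm]
      simp [norm_smul, abs_of_pos htpos]
    rw [hdy]
    calc t * ‖u' - u‖ ≤ (ε / (2 * ‖u' - u‖)) * ‖u' - u‖ :=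
          mul_le_mul_of_nonneg_right (min_le_left _ _) hnuu'.le
      _ = ε / 2 := by field_simp
      _ < ε := by linarith
  · have hxp : x - p = d • u := by
      rw [hu_def, smul_smul, mul_inv_cancel₀ hdpos.ne', one_smul]
    have hxp' : x - p' = d • u' := by
      rw [hu'_def, smul_smul, mul_inv_cancel₀ hdpos.ne', one_smul]
    have hA2 : d + t * c ≤ infDist y K' := by
      refine le_infDist' hK'ne fun q hq => ?_
      have h1 : ⟪y - q, u'⟫ ≤ dist y q := by
        calc ⟪y - q, u'⟫ ≤ ‖y - q‖ * ‖u'‖ := real_inner_le_norm _ _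
          _ = dist y q := by rw [hnu', mul_one, ← dist_eq_norm]
      refine le_trans ?_ h1
      have hyq : y - q = d • u' + t • (u' - u) + (p' - q) := by
        rw [hy_def, ← hxp']; abel
      rw [hyq]
      have h2 : ⟪d • u' + t • (u' - u), u'⟫ = d + t * c := by
        have e1' : ⟪u', u'⟫ = (1:ℝ) := by rw [real_inner_self_eq_norm_sq, hnu']; norm_num
        have e2' : ⟪u, u'⟫ = 1 - c := by rw [hc_def]; ring
        simp only [inner_add_left, real_inner_smul_left, inner_sub_left, e1', e2']
        ring
      have h3 : 0 ≤ ⟪p' - q, u'⟫ := by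
        have hvq := hvarK' q hq
        rw [hu'_def, real_inner_smul_right]
        have h4 : ⟪p' - q, x - p'⟫ = -⟪x - p', q - p'⟫ := by
          rw [real_inner_comm, show (p' - q : F) = -(q - p') by abel, inner_neg_right]
        rw [h4]
        have h5 : 0 ≤ -⟪x - p', q - p'⟫ := by linarith
        positivity
      rw [inner_add_left, h2]
      linarith
    have hA3 : ‖y - p‖ < d + t * c := by
      have hyp : y - p = d • u + t • (u' - u) := by rw [hy_def, ← hxp]; abel
      have e1 : ⟪u, u⟫ = 1 := by rw [real_inner_self_eq_norm_sq, hnu]; norm_num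
      have e3 : ⟪u, u' - u⟫ = -c := by
        rw [inner_sub_right, e1, hc_def, real_inner_comm]; ring
      have e4 : ⟪u' - u, u⟫ = -c := by rw [real_inner_comm]; exact e3
      have e5 : ⟪u' - u, u' - u⟫ = 2 * c := by
        rw [real_inner_self_eq_norm_sq, norm_sub_rev, hc2]
      have hsq : ‖y - p‖ ^ 2 = d ^ 2 - 2 * t * d * c + 2 * t ^ 2 * c := by
        rw [hyp, ← real_inner_self_eq_norm_sq]
        simp only [inner_add_left, inner_add_right, real_inner_smul_left,
          real_inner_smul_right, e1, e3, e4, e5]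
        ring
      have hsq' : ‖y - p‖ ^ 2 < (d + t * c) ^ 2 := by
        rw [hsq]
        have k1 : 0 < t * c := mul_pos htpos hcpos
        have k2 : 0 < 4 * d - 2 * t + t * c := by nlinarith
        nlinarith [mul_pos k1 k2]
      exact lt_of_pow_lt_pow_left₀ 2 (by positivity) hsq'
    have hlt : infDist y K < infDist y K' := by
      calc infDist y K ≤ dist y p := infDist_le_dist_of_mem hpmem
        _ = ‖y - p‖ := dist_eq_norm _ _
        _ < d + t * c := hA3
        _ ≤ infDist y K' := hA2
    exact hlt.ne

private lemma aux_nwd {K K' : Set F}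
    (hKne : K.Nonempty) (hKcl : IsClosed K) (hKcv : Convex ℝ K)
    (hK'ne : K'.Nonempty) (hK'cl : IsClosed K') (hK'cv : Convex ℝ K')
    (f g : F → F) (hf : ∀ x, f x ∈ K ∧ ∀ q ∈ K, dist x (f x) ≤ dist x q)
    (hg : ∀ x, g x ∈ K' ∧ ∀ q ∈ K', dist x (g x) ≤ dist x q) :
    IsNowhereDense {x | f x ≠ g x ∧ infDist x K = infDist x K'} := by
  set B : Set F := {x | f x ≠ g x ∧ infDist x K = infDist x K'} with hB
  show interior (closure B) = ∅
  by_contra h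
  obtain ⟨z, hz⟩ := Set.nonempty_iff_ne_empty.2 h
  have hzc : z ∈ closure B := interior_subset hz
  obtain ⟨x, hxU, hxB⟩ := mem_closure_iff.1 hzc _ isOpen_interior hz
  obtain ⟨ε, hεpos, hball⟩ := Metric.isOpen_iff.1 isOpen_interior x hxU
  obtain ⟨y, hyd, hyne⟩ := aux_pt hKne hKcl hKcv hK'ne hK'cl hK'cv
    (hf x).1 (hf x).2 (hg x).1 (hg x).2 hxB.1 hxB.2 ε hεpos
  have hyU : y ∈ interior (closure B) := hball (Metric.mem_ball.2 hyd)
  have hcl2 : closure B ⊆ {x : F | infDist x K = infDist x K'} :=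
    closure_minimal (fun w hw => hw.2)
      (isClosed_eq (continuous_infDist_pt K) (continuous_infDist_pt K'))
  exact hyne (hcl2 (interior_subset hyU))

theorem stmt5 {n : ℕ} (A : Set (Set (EuclideanSpace ℝ (Fin n)))) (hcount : A.Countable)
    (hne : ∀ K ∈ A, K.Nonempty) (hcl : ∀ K ∈ A, IsClosed K) (hconv : ∀ K ∈ A, Convex ℝ K)
    (proj : Set (EuclideanSpace ℝ (Fin n)) → EuclideanSpace ℝ (Fin n) → EuclideanSpace ℝ (Fin n))
    (hproj : ∀ K ∈ A, ∀ x, proj K x ∈ K ∧ ∀ q ∈ K, dist x (proj K x) ≤ dist x q) :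
    Dense {x₀ : EuclideanSpace ℝ (Fin n) | ∀ K ∈ A, ∀ K' ∈ A, K ≠ K' →
      proj K x₀ ≠ proj K' x₀ → infDist x₀ K ≠ infDist x₀ K'} := by
  classical
  set B : Set (EuclideanSpace ℝ (Fin n)) × Set (EuclideanSpace ℝ (Fin n)) →
      Set (EuclideanSpace ℝ (Fin n)) := fun P =>
    {x | proj P.1 x ≠ proj P.2 x ∧ infDist x P.1 = infDist x P.2} with hBdef
  have hmeag : IsMeagre (⋃₀ (B '' (A ×ˢ A))) := by
    rw [isMeagre_iff_countable_union_isNowhereDense]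
    refine ⟨B '' (A ×ˢ A), ?_, (hcount.prod hcount).image B, subset_rfl⟩
    rintro t ⟨⟨K, K'⟩, ⟨hK, hK'⟩, rfl⟩
    exact aux_nwd (hne K hK) (hcl K hK) (hconv K hK)
      (hne K' hK') (hcl K' hK') (hconv K' hK')
      (proj K) (proj K') (hproj K hK) (hproj K' hK')
  have hsub : (⋃₀ (B '' (A ×ˢ A)))ᶜ ⊆ {x₀ : EuclideanSpace ℝ (Fin n) | ∀ K ∈ A, ∀ K' ∈ A, K ≠ K' →
      proj K x₀ ≠ proj K' x₀ → infDist x₀ K ≠ infDist x₀ K'} := by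
    intro x hx K hK K' hK' _ hpne heq
    exact hx ⟨B (K, K'), ⟨(K, K'), ⟨hK, hK'⟩, rfl⟩, hpne, heq⟩
  exact dense_of_mem_residual (Filter.mem_of_superset hmeag hsub)
end

section
/- Let P be a ranked poset with a Q-grading φ : P → Q (an order-preserving map to a poset Q). Suppose that for every q ∈ Q we are given an acyclic matching M_q on P involving only elements of φ⁻¹(q). Then the union of the matchings M_q is an acyclic matching on P. -/
/-- A matching on a poset: a set of covering pairs `(p, q)` with `q ⋖ p`,
such that every element occurs in at most one pair. -/
def IsMatching {P : Type*} [PartialOrder P] (M : Set (P × P)) : Prop :=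
  (∀ e ∈ M, e.2 ⋖ e.1) ∧
  ∀ e ∈ M, ∀ e' ∈ M, e ≠ e' →
    e.1 ≠ e'.1 ∧ e.1 ≠ e'.2 ∧ e.2 ≠ e'.1 ∧ e.2 ≠ e'.2

/-- The directed graph associated to a matching: every covering edge is oriented
downwards, except the matched ones, which are oriented upwards.
`matchEdge M x y` means there is a directed edge from `x` to `y`. -/
def matchEdge {P : Type*} [PartialOrder P] (M : Set (P × P)) (x y : P) : Prop :=
  (y ⋖ x ∧ (x, y) ∉ M) ∨ (y, x) ∈ M

/-- A matching is acyclic if the associated directed graph has no directed cycle. -/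
def IsAcyclicMatching {P : Type*} [PartialOrder P] (M : Set (P × P)) : Prop :=
  IsMatching M ∧ ∀ x : P, ¬ Relation.TransGen (matchEdge M) x x

section Helpers

variable {P Q : Type*} [PartialOrder P] [PartialOrder Q]
  (φ : P →o Q) (M : Q → Set (P × P))

lemma patchwork_edge_mono (hhom : ∀ q, ∀ e ∈ M q, φ e.1 = q ∧ φ e.2 = q)
    {a b : P} (h : matchEdge (⋃ q, M q) a b) : φ b ≤ φ a := by
  rcases h with ⟨hcov, -⟩ | hmem
  · exact φ.monotone hcov.le
  · obtain ⟨q, hq⟩ := Set.mem_iUnion.mp hmem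
    obtain ⟨h1, h2⟩ := hhom q _ hq
    simp only at h1 h2
    rw [h1, h2]

lemma patchwork_trans_mono (hhom : ∀ q, ∀ e ∈ M q, φ e.1 = q ∧ φ e.2 = q)
    {a b : P} (h : Relation.TransGen (matchEdge (⋃ q, M q)) a b) : φ b ≤ φ a := by
  induction h with
  | single h => exact patchwork_edge_mono φ M hhom h
  | tail _ h ih => exact (patchwork_edge_mono φ M hhom h).trans ih

lemma patchwork_edge_restrict (hhom : ∀ q, ∀ e ∈ M q, φ e.1 = q ∧ φ e.2 = q)
    {a b : P} (h : matchEdge (⋃ q, M q) a b) (hle : φ a ≤ φ b) :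
    matchEdge (M (φ a)) a b ∧ φ b = φ a := by
  rcases h with ⟨hcov, hnm⟩ | hmem
  · refine ⟨Or.inl ⟨hcov, fun hc => hnm (Set.mem_iUnion.mpr ⟨_, hc⟩)⟩, ?_⟩
    exact le_antisymm (φ.monotone hcov.le) hle
  · obtain ⟨q, hq⟩ := Set.mem_iUnion.mp hmem
    obtain ⟨h1, h2⟩ := hhom q _ hq
    simp only at h1 h2
    refine ⟨Or.inr ?_, by rw [h1, h2]⟩
    rwa [h2]

lemma patchwork_trans_restrict (hhom : ∀ q, ∀ e ∈ M q, φ e.1 = q ∧ φ e.2 = q)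
    {a b : P} (h : Relation.TransGen (matchEdge (⋃ q, M q)) a b) (hle : φ a ≤ φ b) :
    Relation.TransGen (matchEdge (M (φ a))) a b ∧ φ b = φ a := by
  induction h with
  | single h =>
    obtain ⟨h', he⟩ := patchwork_edge_restrict φ M hhom h hle
    exact ⟨Relation.TransGen.single h', he⟩
  | @tail b c htr h ih =>
    have hcb : φ c ≤ φ b := patchwork_edge_mono φ M hhom h
    have hba : φ b ≤ φ a := patchwork_trans_mono φ M hhom htr
    obtain ⟨htr', hb⟩ := ih (hle.trans hcb)
    obtain ⟨h', hc⟩ := patchwork_edge_restrict φ M hhom h (by rw [hb]; exact hle)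
    rw [hb] at h'
    exact ⟨htr'.tail h', hc.trans hb⟩

end Helpers

/-- The Patchwork Theorem: given a `Q`-grading `φ : P → Q` and, for every `q ∈ Q`,
an acyclic matching `M q` involving only elements of `φ⁻¹(q)`, the union of the
matchings is an acyclic matching on `P`. -/
theorem patchwork {P Q : Type*} [PartialOrder P] [PartialOrder Q]
    (φ : P →o Q) (M : Q → Set (P × P))
    (hacyclic : ∀ q, IsAcyclicMatching (M q))
    (hhom : ∀ q, ∀ e ∈ M q, φ e.1 = q ∧ φ e.2 = q) :
    IsAcyclicMatching (⋃ q, M q) := by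
  constructor
  · constructor
    · intro e he
      obtain ⟨q, hq⟩ := Set.mem_iUnion.mp he
      exact (hacyclic q).1.1 e hq
    · intro e he e' he' hne
      obtain ⟨q, hq⟩ := Set.mem_iUnion.mp he
      obtain ⟨q', hq'⟩ := Set.mem_iUnion.mp he'
      by_cases hqq : q = q'
      · subst hqq
        exact (hacyclic q).1.2 e hq e' hq' hne
      · obtain ⟨h1, h2⟩ := hhom q e hq
        obtain ⟨h1', h2'⟩ := hhom q' e' hq'
        refine ⟨?_, ?_, ?_, ?_⟩ <;> intro hc <;> apply hqq
        · rw [← h1, hc, h1']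
        · rw [← h1, hc, h2']
        · rw [← h2, hc, h1']
        · rw [← h2, hc, h2']
  · intro x hx
    obtain ⟨htr, -⟩ := patchwork_trans_restrict φ M hhom hx le_rfl
    exact (hacyclic (φ x)).2 x htr
end

section
/- Let A be a locally finite hyperplane arrangement in ℝⁿ with face poset F(A), and fix a total order ⊣ on the set of chambers C(A) of order type ω (or finite). Define S(C) to be the set of Salvetti cells ⟨C',F⟩ with C' = C.F, and N(C) the set of cells of S(C) not lying in any S(C'') with C'' ⊣ C. If ⊣ is a valid order, i.e. for every chamber C the upper ideal J(C) = { X ∈ L(A) : supp(X) ∩ s(C,C') ≠ ∅ for all C' ⊣ C } of the intersection poset is principal, generated by X_C = |F_C| for a face F_C of C, then N(C) = { ⟨D,F⟩ ∈ S(C) : F ⊆ X_C }. -/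
open Metric Set MeasureTheory

noncomputable section

/-- A locally finite arrangement of affine hyperplanes in ℝⁿ, given by affine
equations `⟪a i, x⟫ = b i` with `a i ≠ 0`, indexed injectively by `ι`. -/
structure Arrangement (n : ℕ) (ι : Type) where
  a : ι → EuclideanSpace ℝ (Fin n)
  b : ι → ℝ
  ha : ∀ i, a i ≠ 0
  inj : Function.Injective fun i => {x : EuclideanSpace ℝ (Fin n) | (inner ℝ (a i) x : ℝ) = b i}
  locFin : ∀ x : EuclideanSpace ℝ (Fin n), ∃ ε > 0,
    {i : ι | ∃ y ∈ Metric.ball x ε, (inner ℝ (a i) y : ℝ) = b i}.Finite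

namespace Arrangement

variable {n : ℕ} {ι : Type} (A : Arrangement n ι)

/-- The defining affine functional of the `i`-th hyperplane. -/
def val (i : ι) (x : EuclideanSpace ℝ (Fin n)) : ℝ := (inner ℝ (A.a i) x : ℝ) - A.b i

/-- The `i`-th hyperplane. -/
def hyperplane (i : ι) : Set (EuclideanSpace ℝ (Fin n)) := {x | A.val i x = 0}

/-- The sign vector of a point. -/
def signAt (x : EuclideanSpace ℝ (Fin n)) : ι → SignType := fun i => SignType.sign (A.val i x)

/-- The (relatively open) stratum with sign vector `σ`. -/
def openCell (σ : ι → SignType) : Set (EuclideanSpace ℝ (Fin n)) :=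
  {x | ∀ i, SignType.sign (A.val i x) = σ i}

/-- The (closed) faces of the arrangement: closures of the strata. -/
def IsFace (F : Set (EuclideanSpace ℝ (Fin n))) : Prop :=
  ∃ x : EuclideanSpace ℝ (Fin n), F = closure (A.openCell (A.signAt x))

/-- Chambers: closed faces of codimension 0. -/
def IsChamber (C : Set (EuclideanSpace ℝ (Fin n))) : Prop :=
  ∃ x : EuclideanSpace ℝ (Fin n), (∀ i, A.val i x ≠ 0) ∧
    C = closure (A.openCell (A.signAt x))

/-- The support of a subset: the hyperplanes containing it. -/
def supp (U : Set (EuclideanSpace ℝ (Fin n))) : Set ι := {i | U ⊆ A.hyperplane i}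

/-- The set of hyperplanes separating two chambers. -/
def sep (C C' : Set (EuclideanSpace ℝ (Fin n))) : Set ι :=
  {i | ∀ x ∈ interior C, ∀ y ∈ interior C', A.val i x * A.val i y < 0}

/-- `F` is a face of the chamber (or face) `C`. -/
def IsFaceOf (F C : Set (EuclideanSpace ℝ (Fin n))) : Prop := A.IsFace F ∧ F ⊆ C

/-- `A.IsCF C F D` means `D = C.F`: `D` is the unique chamber containing `F` and not
separated from `C` by any hyperplane of `supp F`. -/
def IsCF (C F D : Set (EuclideanSpace ℝ (Fin n))) : Prop :=
  A.IsChamber D ∧ F ⊆ D ∧ A.sep C D ∩ A.supp F = ∅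

/-- `A.IsOpp D F E` means `E = D^F`: `E` is the chamber opposite to `D` with respect to
its face `F`, i.e. the hyperplanes separating `D` and `E` are exactly those containing `F`. -/
def IsOpp (D F E : Set (EuclideanSpace ℝ (Fin n))) : Prop :=
  A.IsChamber E ∧ F ⊆ E ∧ A.sep D E = A.supp F

/-- Flats: nonempty intersections of subfamilies of hyperplanes (including ℝⁿ itself). -/
def IsFlat (X : Set (EuclideanSpace ℝ (Fin n))) : Prop :=
  X.Nonempty ∧ ∃ s : Set ι, X = ⋂ i ∈ s, A.hyperplane i

/-- A cell `⟨C, F⟩` of the Salvetti complex: a chamber `C` together with a face `F` of `C`. -/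
structure Cell {n : ℕ} {ι : Type} (𝒜 : Arrangement n ι) where
  C : Set (EuclideanSpace ℝ (Fin n))
  F : Set (EuclideanSpace ℝ (Fin n))
  isChamber : 𝒜.IsChamber C
  isFace : 𝒜.IsFace F
  faceLe : F ⊆ C

/-- The Salvetti order: `⟨C,F⟩ ≤ ⟨D,G⟩` iff `F ⪯ G` (i.e. `F ⊇ G`) and `D.F = C`. -/
def cellLE (c d : A.Cell) : Prop := d.F ⊆ c.F ∧ A.IsCF d.C c.F c.C

/-- The subcomplex `S(C)`: cells `⟨D,F⟩` with `D = C.F`. -/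
def inS (C : Set (EuclideanSpace ℝ (Fin n))) (c : A.Cell) : Prop := A.IsCF C c.F c.C

/-- A strict total order on the chambers. -/
def IsChamberOrder (lt : Set (EuclideanSpace ℝ (Fin n)) → Set (EuclideanSpace ℝ (Fin n)) → Prop) :
    Prop :=
  (∀ C C', A.IsChamber C → A.IsChamber C' → C ≠ C' → lt C C' ∨ lt C' C) ∧
  (∀ C, ¬ lt C C) ∧
  (∀ C C' C'', lt C C' → lt C' C'' → lt C C'')

/-- The upper ideal `J(C)` of the poset of flats determined by a total order on chambers. -/
def J (lt : Set (EuclideanSpace ℝ (Fin n)) → Set (EuclideanSpace ℝ (Fin n)) → Prop)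
    (C : Set (EuclideanSpace ℝ (Fin n))) : Set (Set (EuclideanSpace ℝ (Fin n))) :=
  {X | A.IsFlat X ∧ ∀ C', A.IsChamber C' → lt C' C → (A.supp X ∩ A.sep C C').Nonempty}

/-- A valid order: for each chamber `C`, the ideal `J(C)` is the principal upper ideal
(in the poset of flats ordered by reverse inclusion) generated by `X_C = |F_C|` for some
face `F_C` of `C`. -/
def IsValidOrder
    (lt : Set (EuclideanSpace ℝ (Fin n)) → Set (EuclideanSpace ℝ (Fin n)) → Prop) : Prop :=
  A.IsChamberOrder lt ∧
  ∀ C, A.IsChamber C → ∃ F_C, A.IsFaceOf F_C C ∧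
    A.J lt C = {X | A.IsFlat X ∧ X ⊆ (affineSpan ℝ F_C : Set (EuclideanSpace ℝ (Fin n)))}

/-- Membership in `N(C)`: cells of `S(C)` not lying in any earlier `S(C')`. -/
def inN (lt : Set (EuclideanSpace ℝ (Fin n)) → Set (EuclideanSpace ℝ (Fin n)) → Prop)
    (C : Set (EuclideanSpace ℝ (Fin n))) (c : A.Cell) : Prop :=
  A.inS C c ∧ ∀ C', A.IsChamber C' → lt C' C → ¬ A.inS C' c

/-- A point `x₀` is generic with respect to `A`: (i) chambers at equal distance from `x₀`
have the same metric projection of `x₀`, lying in their intersection; (ii) distances to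
strictly comparable flats are strictly comparable. -/
def IsGeneric (x₀ : EuclideanSpace ℝ (Fin n)) : Prop :=
  (∀ C C', A.IsChamber C → A.IsChamber C' → infDist x₀ C = infDist x₀ C' →
    ∀ p ∈ C, ∀ p' ∈ C', (∀ q ∈ C, dist x₀ p ≤ dist x₀ q) →
      (∀ q ∈ C', dist x₀ p' ≤ dist x₀ q) → p = p' ∧ p ∈ C ∩ C') ∧
  (∀ L L', A.IsFlat L → A.IsFlat L' → L' ⊂ L → infDist x₀ L < infDist x₀ L')

end Arrangement

/-! Separation of chambers is read off the signs of the defining functionals at interior points,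
so `s(C, E) = s(C, D) ∆ s(D, E)`. For `⟨D, F⟩ ∈ S(C)` no hyperplane of `supp F` separates `C`
from `D`, hence `⟨D, F⟩ ∈ S(C')` iff no hyperplane of `supp F` separates `C` from `C'`. So
`⟨D, F⟩ ∈ N(C)` iff the flat `⋂ supp F = |F|` lies in `J(C)`, i.e. iff `F ⊆ X_C`. -/

open AffineMap Topology
open scoped symmDiff

theorem convex_setOf_sign_eq {𝕜 : Type*} [Field 𝕜] [LinearOrder 𝕜] [IsStrictOrderedRing 𝕜]
    (s : SignType) : Convex 𝕜 {t : 𝕜 | SignType.sign t = s} := by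
  cases s
  · simp only [SignType.zero_eq_zero, sign_eq_zero_iff, ofPred_eq_eq_singleton]
    exact convex_singleton 0
  · simp only [SignType.neg_eq_neg_one, sign_eq_neg_one_iff]
    exact convex_Iio 0
  · simp only [SignType.pos_eq_one, sign_eq_one_iff]
    exact convex_Ioi 0

namespace Arrangement

variable {n : ℕ} {ι : Type} (A : Arrangement n ι)

def valAffine (i : ι) : EuclideanSpace ℝ (Fin n) →ᵃ[ℝ] ℝ where
  toFun := A.val i
  linear := innerₛₗ ℝ (A.a i)
  map_vadd' p v := by
    simp only [val, vadd_eq_add, inner_add_right, innerₛₗ_apply_apply]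
    ring

theorem val_lineMap (i : ι) (x y : EuclideanSpace ℝ (Fin n)) (t : ℝ) :
    A.val i (lineMap x y t) = lineMap (A.val i x) (A.val i y) t :=
  (A.valAffine i).apply_lineMap x y t

theorem continuous_val (i : ι) : Continuous (A.val i) := by
  unfold val; fun_prop

theorem isClosed_hyperplane (i : ι) : IsClosed (A.hyperplane i) :=
  isClosed_eq (A.continuous_val i) continuous_const

theorem locallyFinite_hyperplane : LocallyFinite A.hyperplane := fun x => by
  obtain ⟨ε, hε, hfin⟩ := A.locFin x
  exact ⟨ball x ε, ball_mem_nhds x hε,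
    hfin.subset fun i ⟨y, hyH, hyB⟩ => ⟨y, hyB, sub_eq_zero.1 hyH⟩⟩

theorem sign_val_eq_of_isPreconnected {i : ι} {s : Set (EuclideanSpace ℝ (Fin n))}
    (hs : IsPreconnected s) (hi : ∀ y ∈ s, A.val i y ≠ 0) {x y : EuclideanSpace ℝ (Fin n)}
    (hx : x ∈ s) (hy : y ∈ s) : SignType.sign (A.val i y) = SignType.sign (A.val i x) := by
  by_contra hne
  obtain ⟨z, hz, hz0⟩ : (0 : ℝ) ∈ A.val i '' s := by
    have hcont := (A.continuous_val i).continuousOn (s := s)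
    rcases (hi x hx).lt_or_gt with h1 | h1 <;> rcases (hi y hy).lt_or_gt with h2 | h2
    · simp [sign_neg h1, sign_neg h2] at hne
    · exact hs.intermediate_value hx hy hcont ⟨h1.le, h2.le⟩
    · exact hs.intermediate_value hy hx hcont ⟨h2.le, h1.le⟩
    · simp [sign_pos h1, sign_pos h2] at hne
  exact hi z hz hz0

theorem eventually_sign_val_eq (x : EuclideanSpace ℝ (Fin n)) :
    ∀ᶠ y in 𝓝 x, ∀ i, A.val i x ≠ 0 → SignType.sign (A.val i y) = SignType.sign (A.val i x) := by
  obtain ⟨ε, hε, hball⟩ := Metric.mem_nhds_iff.1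
    (A.locallyFinite_hyperplane.iInter_compl_mem_nhds A.isClosed_hyperplane x)
  filter_upwards [ball_mem_nhds x hε] with y hy i hi
  exact A.sign_val_eq_of_isPreconnected (convex_ball x ε).isPreconnected
    (fun w hw => mem_iInter₂.1 (hball hw) i hi) (mem_ball_self hε) hy

theorem mem_openCell_signAt (x : EuclideanSpace ℝ (Fin n)) : x ∈ A.openCell (A.signAt x) :=
  fun _ => rfl

theorem convex_openCell (σ : ι → SignType) : Convex ℝ (A.openCell σ) := by
  have : A.openCell σ = ⋂ i, A.valAffine i ⁻¹' {t | SignType.sign t = σ i} := by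
    ext; simp [openCell, valAffine]
  exact this ▸ convex_iInter fun i => (convex_setOf_sign_eq (σ i)).affine_preimage _

theorem isOpen_openCell_signAt {x : EuclideanSpace ℝ (Fin n)} (hx : ∀ i, A.val i x ≠ 0) :
    IsOpen (A.openCell (A.signAt x)) := by
  refine isOpen_iff_mem_nhds.2 fun y hy => ?_
  have hy0 : ∀ i, A.val i y ≠ 0 := fun i h0 =>
    hx i (sign_eq_zero_iff.1 (by rw [← signAt, ← hy i, h0, sign_zero]))
  filter_upwards [A.eventually_sign_val_eq y] with z hz i
  rw [hz i (hy0 i)]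
  exact hy i

theorem interior_closure_openCell_signAt {x : EuclideanSpace ℝ (Fin n)}
    (hx : ∀ i, A.val i x ≠ 0) :
    interior (closure (A.openCell (A.signAt x))) = A.openCell (A.signAt x) := by
  have hopen := A.isOpen_openCell_signAt hx
  rw [(A.convex_openCell _).interior_closure_eq_interior_of_nonempty_interior
    (by rw [hopen.interior_eq]; exact ⟨x, A.mem_openCell_signAt x⟩), hopen.interior_eq]

theorem mem_sep_closure_openCell_iff {x y : EuclideanSpace ℝ (Fin n)} (hx : ∀ i, A.val i x ≠ 0)
    (hy : ∀ i, A.val i y ≠ 0) (i : ι) :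
    i ∈ A.sep (closure (A.openCell (A.signAt x))) (closure (A.openCell (A.signAt y))) ↔
      SignType.sign (A.val i x) * SignType.sign (A.val i y) = -1 := by
  simp only [sep, mem_ofPred_eq, A.interior_closure_openCell_signAt hx,
    A.interior_closure_openCell_signAt hy, ← sign_eq_neg_one_iff, sign_mul]
  refine ⟨fun h => h x (A.mem_openCell_signAt x) y (A.mem_openCell_signAt y),
    fun h u hu v hv => ?_⟩
  rw [hu i, hv i]
  exact h

theorem sep_comm (C D : Set (EuclideanSpace ℝ (Fin n))) : A.sep C D = A.sep D C :=
  ext fun _ => ⟨fun h x hx y hy => mul_comm (A.val _ x) _ ▸ h y hy x hx,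
    fun h x hx y hy => mul_comm (A.val _ x) _ ▸ h y hy x hx⟩

theorem sep_eq_symmDiff {C D E : Set (EuclideanSpace ℝ (Fin n))} (hC : A.IsChamber C)
    (hD : A.IsChamber D) (hE : A.IsChamber E) : A.sep C E = A.sep C D ∆ A.sep D E := by
  obtain ⟨x, hx, rfl⟩ := hC
  obtain ⟨y, hy, rfl⟩ := hD
  obtain ⟨z, hz, rfl⟩ := hE
  ext i
  simp only [mem_symmDiff, A.mem_sep_closure_openCell_iff hx hy,
    A.mem_sep_closure_openCell_iff hy hz, A.mem_sep_closure_openCell_iff hx hz]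
  have hx' := sign_ne_zero.2 (hx i)
  have hy' := sign_ne_zero.2 (hy i)
  have hz' := sign_ne_zero.2 (hz i)
  revert hx' hy' hz'
  generalize SignType.sign (A.val i x) = u
  generalize SignType.sign (A.val i y) = v
  generalize SignType.sign (A.val i z) = w
  revert u v w
  decide

theorem inS_iff_of_inS {C C' : Set (EuclideanSpace ℝ (Fin n))} (hC : A.IsChamber C)
    (hC' : A.IsChamber C') {c : A.Cell} (hc : A.inS C c) :
    A.inS C' c ↔ A.sep C C' ∩ A.supp c.F = ∅ := by
  have : A.sep C' c.C ∩ A.supp c.F = A.sep C C' ∩ A.supp c.F := by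
    rw [A.sep_eq_symmDiff hC' hC c.isChamber, inter_symmDiff_distrib_right, hc.2.2,
      ← bot_eq_empty, symmDiff_bot, A.sep_comm]
  simp only [inS, IsCF, c.isChamber, c.faceLe, true_and, this]

def suppFlat (U : Set (EuclideanSpace ℝ (Fin n))) : Set (EuclideanSpace ℝ (Fin n)) :=
  ⋂ i ∈ A.supp U, A.hyperplane i

theorem subset_suppFlat (U : Set (EuclideanSpace ℝ (Fin n))) : U ⊆ A.suppFlat U :=
  subset_iInter₂ fun _ hi => hi

theorem supp_suppFlat (U : Set (EuclideanSpace ℝ (Fin n))) : A.supp (A.suppFlat U) = A.supp U :=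
  Subset.antisymm (fun _ hi => (A.subset_suppFlat U).trans hi)
    (fun _ hi => biInter_subset_of_mem hi)

theorem isFlat_suppFlat {U : Set (EuclideanSpace ℝ (Fin n))} (hU : U.Nonempty) :
    A.IsFlat (A.suppFlat U) :=
  ⟨hU.mono (A.subset_suppFlat U), _, rfl⟩

theorem nonempty_of_isFace {F : Set (EuclideanSpace ℝ (Fin n))} (hF : A.IsFace F) :
    F.Nonempty := by
  obtain ⟨x, rfl⟩ := hF
  exact ⟨x, subset_closure (A.mem_openCell_signAt x)⟩

theorem closure_openCell_signAt_subset_hyperplane {x : EuclideanSpace ℝ (Fin n)} {i : ι}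
    (hi : A.val i x = 0) : closure (A.openCell (A.signAt x)) ⊆ A.hyperplane i :=
  closure_minimal (fun y hy => sign_eq_zero_iff.1 ((hy i).trans (by simp [signAt, hi])))
    (A.isClosed_hyperplane i)

theorem suppFlat_subset_affineSpan {F : Set (EuclideanSpace ℝ (Fin n))} (hF : A.IsFace F) :
    A.suppFlat F ⊆ affineSpan ℝ F := by
  obtain ⟨x, rfl⟩ := hF
  intro z hz
  -- `lineMap x z t` stays in the stratum of `x` for small `t > 0`, and `z` is on the line
  -- through `x` and that point.
  have hzx : ∀ i, A.val i x = 0 → A.val i z = 0 := fun i hi =>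
    mem_iInter₂.1 hz i (A.closure_openCell_signAt_subset_hyperplane hi)
  have hcell : ∀ᶠ t in 𝓝[>] (0 : ℝ), lineMap x z t ∈ A.openCell (A.signAt x) := by
    have hlim := (lineMap_continuous (p := x) (q := z)).tendsto' 0 x
      (lineMap_apply_zero (k := ℝ) x z)
    filter_upwards [nhdsWithin_le_nhds (hlim.eventually (A.eventually_sign_val_eq x))] with t ht i
    by_cases hi : A.val i x = 0
    · simp [signAt, A.val_lineMap, hi, hzx i hi]
    · exact ht i hi
  obtain ⟨t, ht, htpos⟩ := (hcell.and self_mem_nhdsWithin).exists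
  have hz : lineMap x (lineMap x z t) t⁻¹ = z := by
    rw [lineMap_lineMap_right, inv_mul_cancel₀ (ne_of_gt htpos), lineMap_apply_one]
  rw [← hz]
  exact lineMap_mem _ (subset_affineSpan ℝ _ (subset_closure (A.mem_openCell_signAt x)))
    (subset_affineSpan ℝ _ (subset_closure ht))

end Arrangement

theorem stmt7_general {n : ℕ} {ι : Type} (A : Arrangement n ι)
    (lt : Set (EuclideanSpace ℝ (Fin n)) → Set (EuclideanSpace ℝ (Fin n)) → Prop)
    (C F_C : Set (EuclideanSpace ℝ (Fin n)))
    (hC : A.IsChamber C)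
    (hJ : A.J lt C =
      {X | A.IsFlat X ∧ X ⊆ (affineSpan ℝ F_C : Set (EuclideanSpace ℝ (Fin n)))}) :
    ∀ c : A.Cell, A.inN lt C c ↔
      A.inS C c ∧ c.F ⊆ (affineSpan ℝ F_C : Set (EuclideanSpace ℝ (Fin n))) := by
  intro c
  have hF := A.nonempty_of_isFace c.isFace
  have hXJ : A.suppFlat c.F ∈ A.J lt C ↔ c.F ⊆ affineSpan ℝ F_C := by
    rw [hJ]
    exact ⟨fun h => (A.subset_suppFlat c.F).trans h.2, fun h => ⟨A.isFlat_suppFlat hF,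
      (A.suppFlat_subset_affineSpan c.isFace).trans
        (SetLike.coe_subset_coe.2 (affineSpan_le.2 h))⟩⟩
  rw [← hXJ, Arrangement.inN]
  refine and_congr_right fun hS => ?_
  simp only [Arrangement.J, mem_ofPred_eq, A.isFlat_suppFlat hF, true_and, A.supp_suppFlat]
  refine forall₂_congr fun C' hC' => imp_congr_right fun _ => ?_
  rw [A.inS_iff_of_inS hC hC' hS, inter_comm, nonempty_iff_ne_empty]

/-- For a valid order `⊣`, `N(C) = { ⟨D,F⟩ ∈ S(C) : F ⊆ X_C }`. -/
theorem stmt7 {n : ℕ} {ι : Type} (A : Arrangement n ι)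
    (lt : Set (EuclideanSpace ℝ (Fin n)) → Set (EuclideanSpace ℝ (Fin n)) → Prop)
    (hω : ∀ C, A.IsChamber C → {C' | A.IsChamber C' ∧ lt C' C}.Finite)
    (hvalid : A.IsValidOrder lt)
    (C F_C : Set (EuclideanSpace ℝ (Fin n)))
    (hC : A.IsChamber C) (hFC : A.IsFaceOf F_C C)
    (hJ : A.J lt C =
      {X | A.IsFlat X ∧ X ⊆ (affineSpan ℝ F_C : Set (EuclideanSpace ℝ (Fin n)))}) :
    ∀ c : A.Cell, A.inN lt C c ↔
      A.inS C c ∧ c.F ⊆ (affineSpan ℝ F_C : Set (EuclideanSpace ℝ (Fin n))) :=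
  stmt7_general A lt C F_C hC hJ
end
end
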